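/- arXiv:2207.02675 — 5 statements merged into one kernel-verified Lean document; each statement's English description precedes it below -/
import Mathlib

section
/- Let a, d ∈ ℕ² be ℚ-linearly independent, k ≥ 2, and suppose S = ⟨a, a+d, …, a+kd⟩ is minimally generated by a, a+d, …, a+kd. Then the Apéry set of S with respect to E = {a, a+kd} equals {0, a+d, a+2d, …, a+(k−1)d}. -/
/-- The generators `a, a+d, …, a+kd`, viewed in `ℤ × ℤ` (elements of `ℕ²` are encoded as
nonnegative elements of `ℤ × ℤ`, so that differences make sense). -/
def gensSet (a d : ℤ × ℤ) (k : ℕ) : Set (ℤ × ℤ) :=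
  {x | ∃ i : ℕ, i ≤ k ∧ x = a + (i : ℤ) • d}

/-- The affine semigroup `S_{a,d,k} = ⟨a, a+d, …, a+kd⟩`. -/
def Sadk (a d : ℤ × ℤ) (k : ℕ) : AddSubmonoid (ℤ × ℤ) :=
  AddSubmonoid.closure (gensSet a d k)

/-- `a` and `d` are linearly independent over `ℚ`. -/
def qLinIndep (a d : ℤ × ℤ) : Prop :=
  LinearIndependent ℚ ![((a.1 : ℚ), (a.2 : ℚ)), ((d.1 : ℚ), (d.2 : ℚ))]

/-- The generating set `a, a+d, …, a+kd` is minimal: no generator lies in the submonoid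
generated by the others. -/
def minGen (a d : ℤ × ℤ) (k : ℕ) : Prop :=
  ∀ i : ℕ, i ≤ k →
    a + (i : ℤ) • d ∉
      AddSubmonoid.closure {x : ℤ × ℤ | ∃ j : ℕ, j ≤ k ∧ j ≠ i ∧ x = a + (j : ℤ) • d}

/-- The Apéry set `Ap(S, E) = {x ∈ S | ∀ e ∈ E, x − e ∉ S}`. -/
def aperySet (S : AddSubmonoid (ℤ × ℤ)) (E : Set (ℤ × ℤ)) : Set (ℤ × ℤ) :=
  {x | x ∈ S ∧ ∀ e ∈ E, x - e ∉ S}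

lemma coeffs_zero {a d : ℤ × ℤ} (hli : qLinIndep a d) {p q : ℤ}
    (h : p • a + q • d = 0) : p = 0 ∧ q = 0 := by
  have h1 : p * a.1 + q * d.1 = 0 := by
    have := congrArg Prod.fst h
    simpa using this
  have h2 : p * a.2 + q * d.2 = 0 := by
    have := congrArg Prod.snd h
    simpa using this
  rw [qLinIndep, LinearIndependent.pair_iff] at hli
  have key : (p:ℚ) • (((a.1:ℚ), (a.2:ℚ)) : ℚ × ℚ) + (q:ℚ) • (((d.1:ℚ), (d.2:ℚ)) : ℚ × ℚ) = 0 := by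
    refine Prod.ext ?_ ?_
    · show (p:ℚ) * a.1 + (q:ℚ) * d.1 = 0
      exact_mod_cast h1
    · show (p:ℚ) * a.2 + (q:ℚ) * d.2 = 0
      exact_mod_cast h2
  have := hli (p:ℚ) (q:ℚ) key
  exact ⟨by exact_mod_cast this.1, by exact_mod_cast this.2⟩

lemma mem_Sadk_iff (a d : ℤ × ℤ) (k : ℕ) (x : ℤ × ℤ) :
    x ∈ Sadk a d k ↔ ∃ n m : ℕ, m ≤ n * k ∧ x = (n:ℤ) • a + (m:ℤ) • d := by
  constructor
  · intro hx
    induction hx using AddSubmonoid.closure_induction with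
    | mem y hy =>
        obtain ⟨i, hik, rfl⟩ := hy
        exact ⟨1, i, by simpa using hik, by push_cast; module⟩
    | zero => exact ⟨0, 0, by simp, by simp⟩
    | add y z _ _ hy hz =>
        obtain ⟨n1, m1, h1, rfl⟩ := hy
        obtain ⟨n2, m2, h2, rfl⟩ := hz
        exact ⟨n1 + n2, m1 + m2, by nlinarith, by push_cast; module⟩
  · rintro ⟨n, m, hm, rfl⟩
    induction n generalizing m with
    | zero =>
        have : m = 0 := by omega
        subst this
        simpa using (Sadk a d k).zero_mem
    | succ n ih =>
        have hmin' : min m k ≤ m := min_le_left _ _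
        have hm2 : m ≤ n * k + k := by rw [Nat.succ_mul] at hm; omega
        have hle : m - min m k ≤ n * k := by omega
        have hgen : a + ((min m k : ℕ) : ℤ) • d ∈ Sadk a d k :=
          AddSubmonoid.subset_closure ⟨min m k, min_le_right _ _, rfl⟩
        have hrest := ih (m - min m k) hle
        have heq : ((n+1 : ℕ):ℤ) • a + (m:ℤ) • d
            = (a + ((min m k : ℕ) : ℤ) • d) + (((n:ℕ):ℤ) • a + (((m - min m k : ℕ)):ℤ) • d) := by
          push_cast [Nat.cast_sub hmin']
          module
        rw [heq]
        exact (Sadk a d k).add_mem hgen hrest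

/-- The Apéry set of `S_{a,d,k}` with respect to `E = {a, a+kd}` is
`{0, a+d, a+2d, …, a+(k−1)d}`. -/
theorem aperySet_Sadk (a d : ℤ × ℤ) (k : ℕ) (hk : 2 ≤ k)
    (ha : 0 ≤ a) (hd : 0 ≤ d) (hli : qLinIndep a d) (hmin : minGen a d k) :
    aperySet (Sadk a d k) ({a, a + (k : ℤ) • d} : Set (ℤ × ℤ)) =
      insert 0 {x : ℤ × ℤ | ∃ i : ℕ, 1 ≤ i ∧ i ≤ k - 1 ∧ x = a + (i : ℤ) • d} := by
  ext x
  simp only [aperySet, Set.mem_setOf_eq, Set.mem_insert_iff]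
  constructor
  · rintro ⟨hxS, hE⟩
    obtain ⟨n, m, hm, rfl⟩ := (mem_Sadk_iff a d k _).mp hxS
    have hEa := hE a (Set.mem_insert _ _)
    have hEk := hE (a + (k:ℤ) • d) (Set.mem_insert_of_mem _ rfl)
    rcases n with _ | _ | n
    · left
      have hm0 : m = 0 := by simpa using hm
      subst hm0
      simp
    · -- n = 1
      by_cases h0 : m = 0
      · exfalso
        apply hEa
        rw [mem_Sadk_iff]
        refine ⟨0, 0, Nat.zero_le _, ?_⟩
        subst h0
        push_cast
        module
      · by_cases hK : m = k
        · exfalso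
          apply hEk
          rw [mem_Sadk_iff]
          refine ⟨0, 0, Nat.zero_le _, ?_⟩
          subst hK
          push_cast
          module
        · right
          have hmk : m ≤ k := by simpa using hm
          exact ⟨m, by omega, by omega, by push_cast; module⟩
    · -- n ≥ 2
      exfalso
      by_cases hc : m ≤ (n + 1) * k
      · apply hEa
        rw [mem_Sadk_iff]
        exact ⟨n + 1, m, hc, by push_cast; module⟩
      · apply hEk
        rw [mem_Sadk_iff]
        have hkm : k ≤ m := by
          have h1 : k ≤ (n + 1) * k := Nat.le_mul_of_pos_left k (by omega)
          omega
        have hsplit : (n + 1 + 1) * k = (n + 1) * k + k := by ring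
        refine ⟨n + 1, m - k, by omega, ?_⟩
        push_cast [Nat.cast_sub hkm]
        module
  · rintro (rfl | ⟨i, hi1, hik, rfl⟩)
    · refine ⟨(Sadk a d k).zero_mem, ?_⟩
      intro e he h
      rw [mem_Sadk_iff] at h
      obtain ⟨n, m, hm, heq⟩ := h
      rcases he with he | he <;> rw [he] at heq
      · have h0 : ((n:ℤ) + 1) • a + (m:ℤ) • d = 0 := by
          linear_combination (norm := module) (-1 : ℤ) • heq
        have := coeffs_zero hli h0
        omega
      · have h0 : ((n:ℤ) + 1) • a + ((m:ℤ) + (k:ℤ)) • d = 0 := by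
          linear_combination (norm := module) (-1 : ℤ) • heq
        have := coeffs_zero hli h0
        omega
    · have hilt : i < k := by omega
      refine ⟨(mem_Sadk_iff a d k _).mpr ⟨1, i, by omega, by push_cast; module⟩, ?_⟩
      intro e he h
      rw [mem_Sadk_iff] at h
      obtain ⟨n, m, hm, heq⟩ := h
      rcases he with he | he <;> rw [he] at heq
      · have h0 : (n:ℤ) • a + ((m:ℤ) - (i:ℤ)) • d = 0 := by
          linear_combination (norm := module) (-1 : ℤ) • heq
        obtain ⟨hp, hq⟩ := coeffs_zero hli h0
        have hn : n = 0 := by exact_mod_cast hp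
        subst hn
        simp only [Nat.zero_mul, Nat.le_zero] at hm
        omega
      · have h0 : (n:ℤ) • a + ((m:ℤ) + (k:ℤ) - (i:ℤ)) • d = 0 := by
          linear_combination (norm := module) (-1 : ℤ) • heq
        obtain ⟨hp, hq⟩ := coeffs_zero hli h0
        omega
end

section
/- Let S = S_{a,d,k} ⊆ ℕ² with a, d ℚ-linearly independent and k ≥ 2, minimally generated by a, a+d, …, a+kd. For any two distinct elements x, y of the Apéry set Ap(S, {a, a+kd}), the difference x − y does not lie in the subgroup of ℤ² generated by a and a+kd. -/
/-- Uniqueness of coefficients: `a, d` are `ℚ`-independent, hence `ℤ`-independent. -/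
lemma uniq_coeff {a d : ℤ × ℤ} (hli : qLinIndep a d) :
    ∀ m t m' t' : ℤ, m • a + t • d = m' • a + t' • d → m = m' ∧ t = t' := by
  rw [qLinIndep, LinearIndependent.pair_iff] at hli
  intro m t m' t' h
  rw [Prod.ext_iff] at h
  simp only [Prod.fst_add, Prod.snd_add, Prod.smul_fst, Prod.smul_snd, smul_eq_mul] at h
  have hq1 : (m : ℚ) * a.1 + t * d.1 = m' * a.1 + t' * d.1 := by exact_mod_cast h.1
  have hq2 : (m : ℚ) * a.2 + t * d.2 = m' * a.2 + t' * d.2 := by exact_mod_cast h.2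
  have key := hli ((m - m' : ℤ) : ℚ) ((t - t' : ℤ) : ℚ) (by
    rw [Prod.ext_iff]
    constructor <;> simp only [Prod.smul_fst, Prod.smul_snd, Prod.fst_add, Prod.snd_add,
      smul_eq_mul, Prod.fst_zero, Prod.snd_zero] <;> push_cast <;> linarith)
  have h1 : (m - m' : ℤ) = 0 := by exact_mod_cast key.1
  have h2 : (t - t' : ℤ) = 0 := by exact_mod_cast key.2
  omega

/-- Membership in `S_{a,d,k}`. -/
lemma mem_Sadk {a d : ℤ × ℤ} {k : ℕ} {z : ℤ × ℤ} :
    z ∈ Sadk a d k ↔ ∃ m t : ℕ, t ≤ k * m ∧ z = (m : ℤ) • a + (t : ℤ) • d := by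
  constructor
  · intro hz
    induction hz using AddSubmonoid.closure_induction with
    | mem x hx =>
      obtain ⟨i, hi, rfl⟩ := hx
      exact ⟨1, i, by omega, by simp⟩
    | zero => exact ⟨0, 0, by omega, by simp⟩
    | add x y hx hy ihx ihy =>
      obtain ⟨m1, t1, h1, rfl⟩ := ihx
      obtain ⟨m2, t2, h2, rfl⟩ := ihy
      exact ⟨m1 + m2, t1 + t2, by nlinarith, by push_cast; module⟩
  · rintro ⟨m, t, ht, rfl⟩
    induction m generalizing t with
    | zero =>
      simp only [Nat.mul_zero, Nat.le_zero] at ht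
      subst ht
      simpa using (Sadk a d k).zero_mem
    | succ n ih =>
      have hik : min t k ≤ k := min_le_right _ _
      have hit : min t k ≤ t := min_le_left _ _
      have heq : ((n + 1 : ℕ) : ℤ) • a + (t : ℤ) • d =
          (a + ((min t k : ℕ) : ℤ) • d) + ((n : ℤ) • a + ((t - min t k : ℕ) : ℤ) • d) := by
        push_cast [Nat.cast_sub hit]
        module
      rw [heq]
      exact (Sadk a d k).add_mem (AddSubmonoid.subset_closure ⟨min t k, hik, rfl⟩)
        (ih (t - min t k) (by rw [Nat.mul_succ] at ht; omega))

/-- Characterization of Apéry set elements: they are `0` or `a + t•d` with `1 ≤ t < k`. -/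
lemma apery_char {a d : ℤ × ℤ} {k : ℕ} (hk : 2 ≤ k) {m t : ℕ} (hmt : t ≤ k * m)
    (h1 : (m : ℤ) • a + (t : ℤ) • d - a ∉ Sadk a d k)
    (h2 : (m : ℤ) • a + (t : ℤ) • d - (a + (k : ℤ) • d) ∉ Sadk a d k) :
    (m = 0 ∧ t = 0) ∨ (m = 1 ∧ 1 ≤ t ∧ t < k) := by
  by_cases hm : m = 0
  · subst hm; simp only [Nat.mul_zero, Nat.le_zero] at hmt; exact Or.inl ⟨rfl, hmt⟩
  · obtain ⟨m', rfl⟩ : ∃ m', m = m' + 1 := ⟨m - 1, by omega⟩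
    rw [Nat.mul_succ] at hmt
    right
    have c2 : t < k := by
      by_contra hlt
      push_neg at hlt
      refine h2 (mem_Sadk.mpr ⟨m', t - k, by omega, ?_⟩)
      push_cast [Nat.cast_sub hlt]
      module
    have c1 : ¬ (t ≤ k * m') := by
      intro hle
      refine h1 (mem_Sadk.mpr ⟨m', t, hle, ?_⟩)
      push_cast
      module
    have hm1 : m' = 0 := by
      by_contra h
      have : k ≤ k * m' := Nat.le_mul_of_pos_right k (by omega)
      omega
    subst hm1
    simp only [Nat.mul_zero] at c1
    exact ⟨rfl, by omega, c2⟩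

/-- For distinct `x, y` in the Apéry set of `S_{a,d,k}` with respect to `{a, a+kd}`, the
difference `x − y` is not in the subgroup of `ℤ²` generated by `a` and `a+kd`. -/
theorem apery_diff_not_mem_group (a d : ℤ × ℤ) (k : ℕ) (hk : 2 ≤ k)
    (ha : 0 ≤ a) (hd : 0 ≤ d) (hli : qLinIndep a d) (hmin : minGen a d k) :
    ∀ x ∈ aperySet (Sadk a d k) ({a, a + (k : ℤ) • d} : Set (ℤ × ℤ)),
      ∀ y ∈ aperySet (Sadk a d k) ({a, a + (k : ℤ) • d} : Set (ℤ × ℤ)),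
        x ≠ y → x - y ∉ AddSubgroup.closure ({a, a + (k : ℤ) • d} : Set (ℤ × ℤ)) := by
  intro x hx y hy hne hmem
  obtain ⟨hxS, hxAp⟩ := hx
  obtain ⟨hyS, hyAp⟩ := hy
  obtain ⟨m, t, hmt, rfl⟩ := mem_Sadk.mp hxS
  obtain ⟨n, s, hns, rfl⟩ := mem_Sadk.mp hyS
  have hxc := apery_char hk hmt
    (hxAp a (Set.mem_insert _ _))
    (hxAp _ (Set.mem_insert_of_mem _ rfl))
  have hyc := apery_char hk hns
    (hyAp a (Set.mem_insert _ _))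
    (hyAp _ (Set.mem_insert_of_mem _ rfl))
  obtain ⟨p, q, hpq⟩ := AddSubgroup.mem_closure_pair.mp hmem
  have heq : ((m : ℤ) - n) • a + ((t : ℤ) - s) • d = (p + q) • a + (q * k) • d := by
    have h' : (p + q) • a + (q * (k : ℤ)) • d = p • a + q • (a + (k : ℤ) • d) := by module
    rw [h', hpq]; module
  obtain ⟨hco1, hco2⟩ := uniq_coeff hli _ _ _ _ heq
  -- From the Apéry characterization, `0 ≤ t, s < k`, so `q = 0` and `t = s`.
  have htk : (t : ℤ) < k := by rcases hxc with ⟨_, h⟩ | ⟨_, _, h⟩ <;> exact_mod_cast by omega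
  have hsk : (s : ℤ) < k := by rcases hyc with ⟨_, h⟩ | ⟨_, _, h⟩ <;> exact_mod_cast by omega
  have ht0 : (0 : ℤ) ≤ t := Int.natCast_nonneg t
  have hs0 : (0 : ℤ) ≤ s := Int.natCast_nonneg s
  have hq0 : q = 0 := by
    by_contra hq0
    rcases lt_or_gt_of_ne hq0 with h | h
    · have : q * (k : ℤ) ≤ -k := by nlinarith
      omega
    · have : (k : ℤ) ≤ q * k := by nlinarith
      omega
  have hts : t = s := by
    rw [hq0, zero_mul] at hco2
    omega
  have hmn : m = n := by
    subst hts
    rcases hxc with ⟨hm, ht⟩ | ⟨hm, ht, _⟩ <;> rcases hyc with ⟨hn, hs⟩ | ⟨hn, hs, _⟩ <;> omega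
  exact hne (by rw [hts, hmn])
end

section
/- Let S = S_{a,d,k} as above. The Cohen–Macaulay type of k[S] equals k−1; in particular, k[S] is Gorenstein if and only if k = 2. -/
set_option synthInstance.maxHeartbeats 1000000
set_option maxHeartbeats 1000000

open AddMonoidAlgebra

variable (𝕜 : Type) [Field 𝕜]

/-- The affine semigroup ring `𝕜[S]` of an additive submonoid `S ⊆ ℤ²`. -/
abbrev semigroupRing (S : AddSubmonoid (ℤ × ℤ)) : Type := AddMonoidAlgebra 𝕜 ↥S

/-- The maximal monomial ideal of `𝕜[S]`, generated by all `t^s`, `s ∈ S`, `s ≠ 0`. -/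
noncomputable def monomialMaxIdeal (S : AddSubmonoid (ℤ × ℤ)) : Ideal (semigroupRing 𝕜 S) :=
  Ideal.span {f | ∃ s : ↥S, (s : ℤ × ℤ) ≠ 0 ∧ f = AddMonoidAlgebra.single s 1}

/-- The Cohen–Macaulay type of `𝕜[S]` computed from the Artinian reduction by the system of
parameters `t^{e₁}, t^{e₂}` given by the extremal rays: it is the `𝕜`-dimension of the socle
`(0 : m)` of `𝕜[S]/(t^{e₁}, t^{e₂})`. -/
noncomputable def cmType (S : AddSubmonoid (ℤ × ℤ)) (e₁ e₂ : ↥S) : ℕ :=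
  letI J : Ideal (semigroupRing 𝕜 S) :=
    Ideal.span {AddMonoidAlgebra.single e₁ 1, AddMonoidAlgebra.single e₂ 1}
  letI B := semigroupRing 𝕜 S ⧸ J
  letI mB : Ideal B := (monomialMaxIdeal 𝕜 S).map (Ideal.Quotient.mk J)
  Module.finrank 𝕜
    (Submodule.restrictScalars 𝕜 ((⊥ : Submodule B B).colon (mB : Submodule B B)))

namespace SadkAux

lemma uniq {a d : ℤ × ℤ} (hli : qLinIndep a d) (n m n' m' : ℤ)
    (h : n • a + m • d = n' • a + m' • d) : n = n' ∧ m = m' := by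
  rw [qLinIndep, LinearIndependent.pair_iff] at hli
  have h1 : n * a.1 + m * d.1 = n' * a.1 + m' * d.1 := by
    have := congrArg Prod.fst h
    simpa [Prod.smul_fst, smul_eq_mul] using this
  have h2 : n * a.2 + m * d.2 = n' * a.2 + m' * d.2 := by
    have := congrArg Prod.snd h
    simpa [Prod.smul_snd, smul_eq_mul] using this
  have key := hli ((n : ℚ) - n') ((m : ℚ) - m') (by
    refine Prod.ext ?_ ?_ <;> simp only [Prod.smul_fst, Prod.smul_snd, Prod.fst_add,
      Prod.snd_add, smul_eq_mul, Matrix.cons_val_zero, Matrix.cons_val_one, Matrix.head_cons,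
      Prod.fst_zero, Prod.snd_zero]
    · have : ((n * a.1 + m * d.1 : ℤ) : ℚ) = ((n' * a.1 + m' * d.1 : ℤ) : ℚ) := by
        exact_mod_cast h1
      push_cast at this ⊢; ring_nf; ring_nf at this; linarith
    · have : ((n * a.2 + m * d.2 : ℤ) : ℚ) = ((n' * a.2 + m' * d.2 : ℤ) : ℚ) := by
        exact_mod_cast h2
      push_cast at this ⊢; ring_nf; ring_nf at this; linarith)
  constructor
  · exact_mod_cast sub_eq_zero.mp (by exact_mod_cast key.1)
  · exact_mod_cast sub_eq_zero.mp (by exact_mod_cast key.2)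

lemma mem_Sadk {a d : ℤ × ℤ} {k : ℕ} {x : ℤ × ℤ} :
    x ∈ Sadk a d k ↔ ∃ n m : ℕ, m ≤ n * k ∧ x = (n : ℤ) • a + (m : ℤ) • d := by
  constructor
  · intro hx
    induction hx using AddSubmonoid.closure_induction with
    | mem y hy =>
        obtain ⟨i, hik, rfl⟩ := hy
        exact ⟨1, i, by simpa using hik, by push_cast; module⟩
    | zero => exact ⟨0, 0, by simp, by simp⟩
    | add y z _ _ hy hz =>
        obtain ⟨n1, m1, h1, rfl⟩ := hy
        obtain ⟨n2, m2, h2, rfl⟩ := hz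
        exact ⟨n1 + n2, m1 + m2, by nlinarith, by push_cast; module⟩
  · rintro ⟨n, m, hm, rfl⟩
    induction n generalizing m with
    | zero =>
        obtain rfl : m = 0 := by omega
        simpa using (Sadk a d k).zero_mem
    | succ n ih =>
        have hgen : a + ((min m k : ℕ) : ℤ) • d ∈ Sadk a d k :=
          AddSubmonoid.subset_closure ⟨min m k, min_le_right _ _, rfl⟩
        have hrest : ((n : ℤ)) • a + ((m - min m k : ℕ) : ℤ) • d ∈ Sadk a d k := by
          apply ih
          rcases le_total m k with h | h
          · simp [min_eq_left h]
          · rw [min_eq_right h]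
            have h1 : m ≤ (n + 1) * k := hm
            have h2 : (n + 1) * k = n * k + k := by ring
            omega
        have := (Sadk a d k).add_mem hgen hrest
        convert this using 1
        have hmin : (min m k) ≤ m := min_le_left _ _
        push_cast [Nat.cast_sub hmin]
        module

def IsAp (a d : ℤ × ℤ) (k : ℕ) (x : ℤ × ℤ) : Prop :=
  x = 0 ∨ ∃ m : ℕ, 1 ≤ m ∧ m < k ∧ x = a + (m : ℤ) • d

variable {a d : ℤ × ℤ} {k : ℕ}

lemma memS_ap {m : ℕ} (hm : m ≤ k) : a + (m : ℤ) • d ∈ Sadk a d k :=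
  mem_Sadk.2 ⟨1, m, by simpa using hm, by push_cast; module⟩

lemma memS_a : a ∈ Sadk a d k := by simpa using memS_ap (Nat.zero_le k)

lemma memS_e : a + (k : ℤ) • d ∈ Sadk a d k := memS_ap le_rfl

lemma exists_rep_pos {x : ℤ × ℤ} (hx : x ∈ Sadk a d k) (hx0 : x ≠ 0) :
    ∃ n m : ℕ, 1 ≤ n ∧ m ≤ n * k ∧ x = (n : ℤ) • a + (m : ℤ) • d := by
  obtain ⟨n, m, hm, rfl⟩ := mem_Sadk.1 hx
  refine ⟨n, m, ?_, hm, rfl⟩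
  rcases Nat.eq_zero_or_pos n with rfl | h
  · exfalso
    apply hx0
    obtain rfl : m = 0 := by simpa using hm
    simp
  · exact h

lemma not_ap_decomp (hli : qLinIndep a d) {x : ℤ × ℤ} (hx : x ∈ Sadk a d k)
    (hap : ¬ IsAp a d k x) :
    (∃ y ∈ Sadk a d k, x = a + y) ∨ (∃ y ∈ Sadk a d k, x = (a + (k : ℤ) • d) + y) := by
  have hx0 : x ≠ 0 := fun h => hap (Or.inl h)
  obtain ⟨n, m, hn, hm, rfl⟩ := exists_rep_pos hx hx0
  obtain ⟨n', rfl⟩ : ∃ n', n = n' + 1 := ⟨n - 1, by omega⟩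
  rcases le_or_gt m (n' * k) with h | h
  · left
    exact ⟨(n' : ℤ) • a + (m : ℤ) • d, mem_Sadk.2 ⟨n', m, h, rfl⟩, by push_cast; module⟩
  · -- m > n' * k
    rcases lt_or_ge m k with hmk | hmk
    · -- then n' = 0 and x = a + m d with 1 ≤ m < k : apery, contradiction
      exfalso
      have hn0 : n' = 0 := by
        by_contra hne
        have : k ≤ n' * k := Nat.le_mul_of_pos_left k (by omega)
        omega
      subst hn0
      exact hap (Or.inr ⟨m, by omega, hmk, by simp⟩)
    · right
      refine ⟨(n' : ℤ) • a + ((m - k : ℕ) : ℤ) • d, mem_Sadk.2 ⟨n', m - k, ?_, rfl⟩, ?_⟩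
      · have : (n' + 1) * k = n' * k + k := by ring
        omega
      · push_cast [Nat.cast_sub hmk]; module

lemma add_ap (hli : qLinIndep a d) {x y : ℤ × ℤ} (hx : x ∈ Sadk a d k)
    (hy : y ∈ Sadk a d k) (hap : IsAp a d k (x + y)) : IsAp a d k y := by
  obtain ⟨n, m, hm, rfl⟩ := mem_Sadk.1 hx
  obtain ⟨n', m', hm', rfl⟩ := mem_Sadk.1 hy
  rcases hap with h0 | ⟨j, hj1, hjk, hj⟩
  · have := uniq hli ((n : ℤ) + n') ((m : ℤ) + m') 0 0 (by linear_combination (norm := module) h0)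
    obtain rfl : n' = 0 := by omega
    obtain rfl : m' = 0 := by omega
    exact Or.inl (by simp)
  · have := uniq hli ((n : ℤ) + n') ((m : ℤ) + m') 1 (j : ℤ)
      (by linear_combination (norm := module) hj)
    obtain ⟨h1, h2⟩ := this
    rcases Nat.eq_zero_or_pos n' with rfl | hpos
    · obtain rfl : m' = 0 := by simpa using hm'
      exact Or.inl (by simp)
    · obtain rfl : n' = 1 := by omega
      obtain rfl : n = 0 := by omega
      obtain rfl : m = 0 := by simpa using hm
      refine Or.inr ⟨j, hj1, hjk, ?_⟩
      have : (m' : ℤ) = j := by omega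
      simp [this]

lemma shift_not_ap (hli : qLinIndep a d) {s : ℤ × ℤ} (hs : s ∈ Sadk a d k)
    (hs0 : s ≠ 0) (m : ℕ) : ¬ IsAp a d k (a + (m : ℤ) • d + s) := by
  obtain ⟨n', m', hn', hm', rfl⟩ := exists_rep_pos hs hs0
  rintro (h0 | ⟨j, hj1, hjk, hj⟩)
  · have := uniq hli (1 + n') ((m : ℤ) + m') 0 0 (by
      linear_combination (norm := module) h0)
    omega
  · have := uniq hli (1 + n') ((m : ℤ) + m') 1 (j : ℤ)
      (by linear_combination (norm := module) hj)
    omega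

lemma not_ap_a (hli : qLinIndep a d) : ¬ IsAp a d k a := by
  rintro (h0 | ⟨j, hj1, hjk, hj⟩)
  · have := uniq hli 1 0 0 0 (by linear_combination (norm := module) h0)
    omega
  · have := uniq hli 1 0 1 (j : ℤ) (by linear_combination (norm := module) hj)
    omega

lemma not_ap_e (hli : qLinIndep a d) : ¬ IsAp a d k (a + (k : ℤ) • d) := by
  rintro (h0 | ⟨j, hj1, hjk, hj⟩)
  · have := uniq hli 1 (k : ℤ) 0 0 (by linear_combination (norm := module) h0)
    omega
  · have := uniq hli 1 (k : ℤ) 1 (j : ℤ) (by linear_combination (norm := module) hj)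
    have : (k : ℤ) = j := this.2
    omega

lemma ap_inj (hli : qLinIndep a d) {m m' : ℕ}
    (h : a + (m : ℤ) • d = a + (m' : ℤ) • d) : m = m' := by
  have := uniq hli 1 (m : ℤ) 1 (m' : ℤ) (by linear_combination (norm := module) h)
  omega

lemma ap_ne_zero (hli : qLinIndep a d) (m : ℕ) : a + (m : ℤ) • d ≠ 0 := by
  intro h0
  have := uniq hli 1 (m : ℤ) 0 0 (by linear_combination (norm := module) h0)
  omega

lemma is_ap_ad (hk : 2 ≤ k) : IsAp a d k (a + d) :=
  Or.inr ⟨1, le_rfl, by omega, by simp⟩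


variable (a d : ℤ × ℤ) (k : ℕ)

noncomputable def Jadk : Ideal (semigroupRing 𝕜 (Sadk a d k)) :=
  Ideal.span {AddMonoidAlgebra.single ⟨a, memS_a⟩ 1,
    AddMonoidAlgebra.single ⟨a + (k : ℤ) • d, memS_e⟩ 1}

def Pap (f : semigroupRing 𝕜 (Sadk a d k)) : Prop :=
  ∀ x : ↥(Sadk a d k), IsAp a d k ↑x → f.coeff x = 0

variable {a d k}

lemma J_iff_P (hli : qLinIndep a d) (f : semigroupRing 𝕜 (Sadk a d k)) :
    f ∈ Jadk 𝕜 a d k ↔ Pap 𝕜 a d k f := by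
  classical
  constructor
  · intro hf
    refine Submodule.span_induction ?_ ?_ ?_ ?_ hf
    · rintro g hg
      rcases hg with rfl | rfl
      · intro x hx
        rw [show (AddMonoidAlgebra.single (⟨a, memS_a⟩ : ↥(Sadk a d k)) (1:𝕜)).coeff x
            = if (⟨a, memS_a⟩ : ↥(Sadk a d k)) = x then (1:𝕜) else 0 from Finsupp.single_apply]
        rw [if_neg]
        intro h
        exact not_ap_a hli (by rw [← h] at hx; exact hx)
      · intro x hx
        rw [show (AddMonoidAlgebra.single (⟨a + (k:ℤ) • d, memS_e⟩ : ↥(Sadk a d k)) (1:𝕜)).coeff x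
            = if (⟨a + (k:ℤ) • d, memS_e⟩ : ↥(Sadk a d k)) = x then (1:𝕜) else 0 from Finsupp.single_apply]
        rw [if_neg]
        intro h
        exact not_ap_e hli (by rw [← h] at hx; exact hx)
    · intro x hx
      simp
    · intro g h _ _ hg hh x hx
      rw [show (g + h).coeff x = g.coeff x + h.coeff x from Finsupp.add_apply _ _ x, hg x hx, hh x hx, add_zero]
    · intro g f _ hf x hx
      rw [smul_eq_mul, AddMonoidAlgebra.mul_apply]
      apply Finset.sum_eq_zero
      intro y hy
      apply Finset.sum_eq_zero
      intro z hz
      dsimp only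
      by_cases h : y + z = x
      · rw [if_pos h]
        have hz' : IsAp a d k ↑z := by
          apply add_ap hli y.2 z.2
          rw [show (↑y + ↑z : ℤ × ℤ) = ↑(y + z) from rfl, h]
          exact hx
        rw [hf z hz', mul_zero]
      · rw [if_neg h]
  · intro hf
    have h1 : f.coeff ∈ Finsupp.supported 𝕜 𝕜 {x : ↥(Sadk a d k) | ¬ IsAp a d k ↑x} := by
      rw [Finsupp.mem_supported]
      intro x hx
      by_contra hc
      simp only [Set.mem_setOf_eq, not_not] at hc
      exact (Finsupp.mem_support_iff.1 hx) (hf x hc)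
    rw [Finsupp.supported_eq_span_single] at h1
    have h2 : Submodule.span 𝕜 ((fun i => Finsupp.single i (1:𝕜)) ''
          {x : ↥(Sadk a d k) | ¬ IsAp a d k ↑x}) ≤
        (Submodule.restrictScalars 𝕜 (Jadk 𝕜 a d k)).comap
          (AddMonoidAlgebra.coeffLinearEquiv 𝕜 :
            semigroupRing 𝕜 (Sadk a d k) ≃ₗ[𝕜] _).symm.toLinearMap := by
      rw [Submodule.span_le]
      rintro _ ⟨x, hx, rfl⟩
      simp only [Set.mem_setOf_eq] at hx
      dsimp only
      show AddMonoidAlgebra.single x (1:𝕜) ∈ Submodule.restrictScalars 𝕜 (Jadk 𝕜 a d k)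
      rcases not_ap_decomp hli x.2 hx with ⟨y, hyS, hxy⟩ | ⟨y, hyS, hxy⟩
      · have heq : AddMonoidAlgebra.single x (1:𝕜) =
            AddMonoidAlgebra.single (⟨a, memS_a⟩ : ↥(Sadk a d k)) 1 *
              AddMonoidAlgebra.single (⟨y, hyS⟩ : ↥(Sadk a d k)) 1 := by
          rw [AddMonoidAlgebra.single_mul_single, one_mul]
          congr 1
          exact Subtype.ext hxy
        rw [heq]
        exact Ideal.mul_mem_right _ _ (Ideal.subset_span (Set.mem_insert _ _))
      · have heq : AddMonoidAlgebra.single x (1:𝕜) =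
            AddMonoidAlgebra.single (⟨a + (k:ℤ) • d, memS_e⟩ : ↥(Sadk a d k)) 1 *
              AddMonoidAlgebra.single (⟨y, hyS⟩ : ↥(Sadk a d k)) 1 := by
          rw [AddMonoidAlgebra.single_mul_single, one_mul]
          congr 1
          exact Subtype.ext hxy
        rw [heq]
        exact Ideal.mul_mem_right _ _ (Ideal.subset_span (Set.mem_insert_iff.2 (Or.inr rfl)))
    exact h2 h1

lemma eval_sum {n : ℕ} (c : Fin n → 𝕜) (v : Fin n → ↥(Sadk a d k)) (x : ↥(Sadk a d k)) :
    (∑ i, c i • AddMonoidAlgebra.single (v i) (1:𝕜)).coeff x = ∑ i, if v i = x then c i else 0 := by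
  classical
  rw [show ((∑ i, c i • AddMonoidAlgebra.single (v i) (1:𝕜)).coeff x)
      = ∑ i, (c i • AddMonoidAlgebra.single (v i) (1:𝕜)).coeff x from by
        rw [AddMonoidAlgebra.coeff_sum, Finsupp.finset_sum_apply]]
  refine Finset.sum_congr rfl fun i _ => ?_
  rw [AddMonoidAlgebra.coeff_smul, AddMonoidAlgebra.coeff_single, Finsupp.smul_apply,
    Finsupp.single_apply, smul_eq_mul, mul_ite, mul_one, mul_zero]


variable (a d : ℤ × ℤ) (k : ℕ)

noncomputable def apvD (i : Fin (k-1)) : ↥(Sadk a d k) :=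
  ⟨a + (((i:ℕ)+1 : ℕ) : ℤ) • d, memS_ap (by have := i.isLt; omega)⟩

noncomputable def bD (i : Fin (k-1)) : semigroupRing 𝕜 (Sadk a d k) ⧸ Jadk 𝕜 a d k :=
  Ideal.Quotient.mk (Jadk 𝕜 a d k) (AddMonoidAlgebra.single (apvD a d k i) 1)

variable {a d k}

lemma bD_eq (i : Fin (k-1)) : bD 𝕜 a d k i
    = Ideal.Quotient.mk (Jadk 𝕜 a d k) (AddMonoidAlgebra.single (apvD a d k i) 1) := rfl

lemma hmkL (x : semigroupRing 𝕜 (Sadk a d k)) :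
    Ideal.Quotient.mk (Jadk 𝕜 a d k) x = Ideal.Quotient.mkₐ 𝕜 (Jadk 𝕜 a d k) x :=
  (congrFun (Ideal.Quotient.mkₐ_eq_mk 𝕜 (Jadk 𝕜 a d k)) x).symm

lemma apvD_ap (i : Fin (k-1)) : IsAp a d k ↑(apvD a d k i) :=
  Or.inr ⟨(i:ℕ)+1, by omega, by have := i.isLt; omega, rfl⟩

lemma apvD_inj (hli : qLinIndep a d) : Function.Injective (apvD a d k) := by
  intro i j h
  have h2 := ap_inj hli (congrArg Subtype.val h)
  exact Fin.ext (by omega)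

lemma bD_lin (hli : qLinIndep a d) : LinearIndependent 𝕜 (bD 𝕜 a d k) := by
  classical
  set S := Sadk a d k with hSdef
  set J : Ideal (semigroupRing 𝕜 S) := Jadk 𝕜 a d k with hJdef
  set apv := apvD a d k with hapv
  rw [Fintype.linearIndependent_iff]
  intro g hg i
  have h0 : (∑ j, g j • bD 𝕜 a d k j)
      = Ideal.Quotient.mk J (∑ j, g j • AddMonoidAlgebra.single (apv j) (1:𝕜)) := by
    rw [hmkL, map_sum]
    refine Finset.sum_congr rfl fun j _ => ?_
    rw [map_smul (Ideal.Quotient.mkₐ 𝕜 J)]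
    exact congrArg (fun z => g j • z) (hmkL 𝕜 _)
  have hmem : (∑ j, g j • AddMonoidAlgebra.single (apv j) (1:𝕜)) ∈ J :=
    Ideal.Quotient.eq_zero_iff_mem.1 (by rw [← h0]; exact hg)
  have hP := (J_iff_P 𝕜 hli _).1 hmem
  have hP2 := hP (apv i) (apvD_ap i)
  rw [eval_sum] at hP2
  rw [Finset.sum_congr rfl (fun j _ =>
    show (if apv j = apv i then g j else 0) = if j = i then g j else 0 from by
      by_cases h : j = i
      · rw [if_pos h, if_pos (by rw [h])]
      · rw [if_neg (fun hc => h (apvD_inj hli hc)), if_neg h]),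
    Finset.sum_ite_eq' Finset.univ i g] at hP2
  simpa using hP2

lemma soc_le_span (hk : 2 ≤ k) (hli : qLinIndep a d) :
    Submodule.restrictScalars 𝕜
      ((⊥ : Submodule (semigroupRing 𝕜 (Sadk a d k) ⧸ Jadk 𝕜 a d k)
          (semigroupRing 𝕜 (Sadk a d k) ⧸ Jadk 𝕜 a d k)).colon
        ((monomialMaxIdeal 𝕜 (Sadk a d k)).map (Ideal.Quotient.mk (Jadk 𝕜 a d k))))
      ≤ Submodule.span 𝕜 (Set.range (bD 𝕜 a d k)) := by
  classical
  set S := Sadk a d k with hSdef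
  set J : Ideal (semigroupRing 𝕜 S) := Jadk 𝕜 a d k with hJdef
  set mB : Ideal (semigroupRing 𝕜 S ⧸ J) := (monomialMaxIdeal 𝕜 S).map (Ideal.Quotient.mk J)
    with hmBdef
  set apv := apvD a d k with hapv
  have apv_coe : ∀ i : Fin (k-1), (apv i : ℤ × ℤ) = a + (((i:ℕ)+1 : ℕ) : ℤ) • d :=
    fun i => rfl
  have hadS : a + d ∈ S := by
    have := memS_ap (a := a) (d := d) (show 1 ≤ k by omega)
    simpa using this
  set s₁ : ↥S := ⟨a + d, hadS⟩ with hs₁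
  have hs₁ne : (s₁ : ℤ × ℤ) ≠ 0 := by
    have := ap_ne_zero hli (a := a) (d := d) 1
    show a + d ≠ 0
    simpa using this
  have hs₁ap : IsAp a d k ↑s₁ := is_ap_ad hk
  intro r hr
  rw [Submodule.restrictScalars_mem] at hr
  obtain ⟨f, rfl⟩ := Ideal.Quotient.mk_surjective r
  set F : semigroupRing 𝕜 S :=
    ∑ i, f.coeff (apv i) • AddMonoidAlgebra.single (apv i) (1:𝕜) with hF
  set c0 : 𝕜 := f.coeff 0 with hc0
  have hPdiff : Pap 𝕜 a d k
      (f - (c0 • AddMonoidAlgebra.single 0 1 + F)) := by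
    intro x hx
    rw [AddMonoidAlgebra.coeff_sub, AddMonoidAlgebra.coeff_add, AddMonoidAlgebra.coeff_smul,
      AddMonoidAlgebra.coeff_single,
      Finsupp.sub_apply, Finsupp.add_apply, Finsupp.smul_apply, Finsupp.single_apply,
      hF, eval_sum]
    rcases hx with hx0 | ⟨j, hj1, hjk, hj⟩
    · obtain rfl : (0 : ↥S) = x := (Subtype.ext hx0).symm
      rw [if_pos rfl]
      rw [Finset.sum_eq_zero fun (i : Fin (k-1)) _ =>
        if_neg fun hc => ap_ne_zero hli ((i:ℕ)+1) (congrArg Subtype.val hc)]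
      simp [hc0]
    · have hjlt : j - 1 < k - 1 := by omega
      have hxap : apv ⟨j-1, hjlt⟩ = x := by
        apply Subtype.ext
        rw [apv_coe, hj]
        show a + (((j-1)+1 : ℕ) : ℤ) • d = a + (j : ℤ) • d
        congr 2
        omega
      rw [if_neg fun hc => ap_ne_zero hli j
        (by rw [← hj]; exact (congrArg Subtype.val hc).symm)]
      rw [Finset.sum_congr rfl (fun i _ =>
        show (if apv i = x then f.coeff (apv i) else 0)
            = if i = (⟨j-1, hjlt⟩ : Fin (k-1)) then f.coeff (apv i) else 0 from by
          by_cases h : i = (⟨j-1, hjlt⟩ : Fin (k-1))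
          · rw [if_pos h, if_pos (by rw [h]; exact hxap)]
          · rw [if_neg (fun hc => h (apvD_inj hli (hc.trans hxap.symm))), if_neg h]),
        Finset.sum_ite_eq' Finset.univ (⟨j-1, hjlt⟩ : Fin (k-1)) (fun i => f.coeff (apv i))]
      simp [hxap]
  have hfF : Ideal.Quotient.mk J f
      = Ideal.Quotient.mk J (c0 • AddMonoidAlgebra.single 0 1 + F) :=
    Ideal.Quotient.eq.2 ((J_iff_P 𝕜 hli _).2 hPdiff)
  have hsmem : Ideal.Quotient.mk J (AddMonoidAlgebra.single s₁ (1:𝕜)) ∈ mB :=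
    Ideal.mem_map_of_mem _ (Ideal.subset_span ⟨s₁, hs₁ne, rfl⟩)
  have hzero := Submodule.mem_colon.1 hr _ hsmem
  rw [Submodule.mem_bot, smul_eq_mul, hfF, ← map_mul] at hzero
  have hPmul := (J_iff_P 𝕜 hli _).1 (Ideal.Quotient.eq_zero_iff_mem.1 hzero)
  have hexp : (c0 • AddMonoidAlgebra.single 0 1 + F) * AddMonoidAlgebra.single s₁ (1:𝕜)
      = c0 • AddMonoidAlgebra.single s₁ 1
        + ∑ i, f.coeff (apv i) • AddMonoidAlgebra.single (apv i + s₁) (1:𝕜) := by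
    rw [add_mul, smul_mul_assoc, AddMonoidAlgebra.single_mul_single, one_mul, zero_add,
      hF, Finset.sum_mul]
    congr 1
    refine Finset.sum_congr rfl fun i _ => ?_
    rw [smul_mul_assoc, AddMonoidAlgebra.single_mul_single, one_mul]
  have hc0z : c0 = 0 := by
    have h2 := hPmul s₁ hs₁ap
    rw [hexp, AddMonoidAlgebra.coeff_add, AddMonoidAlgebra.coeff_smul,
      AddMonoidAlgebra.coeff_single, Finsupp.add_apply, Finsupp.smul_apply, Finsupp.single_apply, if_pos rfl,
      eval_sum] at h2
    have hz : ∀ i : Fin (k-1), apv i + s₁ ≠ s₁ := by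
      intro i hc
      have hcoe : a + (((i:ℕ)+1 : ℕ) : ℤ) • d + (a + d) = a + d := congrArg Subtype.val hc
      push_cast at hcoe
      have := uniq hli 2 (((i:ℕ):ℤ)+2) 1 1 (by linear_combination (norm := module) hcoe)
      have h21 : (2:ℤ) = 1 := this.1
      norm_num at h21
    rw [Finset.sum_eq_zero (fun i _ => if_neg (hz i))] at h2
    simpa using h2
  rw [hfF, hc0z, zero_smul, zero_add]
  have hFmk : Ideal.Quotient.mk J F = ∑ i, f.coeff (apv i) • bD 𝕜 a d k i := by
    rw [hmkL, hF, map_sum]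
    refine Finset.sum_congr rfl fun i _ => ?_
    rw [map_smul (Ideal.Quotient.mkₐ 𝕜 J)]
    exact congrArg (fun z => f.coeff (apv i) • z) (hmkL 𝕜 _).symm
  rw [hFmk]
  exact Submodule.sum_mem _ fun i _ =>
    Submodule.smul_mem _ _ (Submodule.subset_span ⟨i, rfl⟩)

lemma span_le_soc (hli : qLinIndep a d) :
    Submodule.span 𝕜 (Set.range (bD 𝕜 a d k))
      ≤ Submodule.restrictScalars 𝕜
        ((⊥ : Submodule (semigroupRing 𝕜 (Sadk a d k) ⧸ Jadk 𝕜 a d k)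
            (semigroupRing 𝕜 (Sadk a d k) ⧸ Jadk 𝕜 a d k)).colon
          ((monomialMaxIdeal 𝕜 (Sadk a d k)).map (Ideal.Quotient.mk (Jadk 𝕜 a d k)))) := by
  classical
  set S := Sadk a d k with hSdef
  set J : Ideal (semigroupRing 𝕜 S) := Jadk 𝕜 a d k with hJdef
  rw [Submodule.span_le]
  rintro _ ⟨i, rfl⟩
  simp only [SetLike.mem_coe, Submodule.restrictScalars_mem]
  rw [Submodule.mem_colon]
  intro p hp
  rw [Submodule.mem_bot]
  obtain ⟨q, hq, rfl⟩ :=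
    (Ideal.mem_map_iff_of_surjective _ Ideal.Quotient.mk_surjective).1 hp
  have hq' : q ∈ Ideal.span
      {f | ∃ s : ↥S, (s : ℤ × ℤ) ≠ 0 ∧ f = AddMonoidAlgebra.single s (1:𝕜)} := hq
  have key : AddMonoidAlgebra.single (apvD a d k i) (1:𝕜) * q ∈ J := by
    refine Submodule.span_induction ?_ ?_ ?_ ?_ hq'
    · rintro g ⟨s, hs0, rfl⟩
      rw [AddMonoidAlgebra.single_mul_single, one_mul]
      refine (J_iff_P 𝕜 hli _).2 ?_
      intro x hx
      rw [AddMonoidAlgebra.coeff_single, Finsupp.single_apply, if_neg]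
      intro hc
      have hcoe : a + (((i:ℕ)+1 : ℕ) : ℤ) • d + (s : ℤ × ℤ) = ↑x := congrArg Subtype.val hc
      rw [← hcoe] at hx
      exact shift_not_ap hli s.2 hs0 ((i:ℕ)+1) hx
    · rw [mul_zero]; exact J.zero_mem
    · intro x y _ _ hx hy
      rw [mul_add]; exact J.add_mem hx hy
    · intro r x _ hx
      rw [smul_eq_mul, mul_left_comm]
      exact Ideal.mul_mem_left _ _ hx
  rw [bD_eq, smul_eq_mul, ← map_mul, Ideal.Quotient.eq_zero_iff_mem]
  exact key

lemma socle_finrank (hk : 2 ≤ k) (hli : qLinIndep a d) :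
    Module.finrank 𝕜 (Submodule.restrictScalars 𝕜
      ((⊥ : Submodule (semigroupRing 𝕜 (Sadk a d k) ⧸ Jadk 𝕜 a d k)
          (semigroupRing 𝕜 (Sadk a d k) ⧸ Jadk 𝕜 a d k)).colon
        ((monomialMaxIdeal 𝕜 (Sadk a d k)).map (Ideal.Quotient.mk (Jadk 𝕜 a d k))))) = k - 1 := by
  rw [le_antisymm (soc_le_span 𝕜 hk hli) (span_le_soc 𝕜 hli),
    finrank_span_eq_card (bD_lin 𝕜 hli), Fintype.card_fin]

end SadkAux

/-- The Cohen–Macaulay type of `𝕜[S_{a,d,k}]` (the socle dimension of its Artinian reduction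
by the extremal-ray parameters `t^a, t^{a+kd}`) equals `k − 1`; in particular, since
`𝕜[S_{a,d,k}]` is Cohen–Macaulay, it is Gorenstein (type one) if and only if `k = 2`. -/
theorem cmType_Sadk (a d : ℤ × ℤ) (k : ℕ) (hk : 2 ≤ k)
    (ha : 0 ≤ a) (hd : 0 ≤ d) (hli : qLinIndep a d) (hmin : minGen a d k)
    (haS : a ∈ Sadk a d k) (heS : a + (k : ℤ) • d ∈ Sadk a d k) :
    cmType 𝕜 (Sadk a d k) ⟨a, haS⟩ ⟨a + (k : ℤ) • d, heS⟩ = k - 1 ∧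
    (cmType 𝕜 (Sadk a d k) ⟨a, haS⟩ ⟨a + (k : ℤ) • d, heS⟩ = 1 ↔ k = 2) := by
  have h : cmType 𝕜 (Sadk a d k) ⟨a, haS⟩ ⟨a + (k : ℤ) • d, heS⟩ = k - 1 :=
    SadkAux.socle_finrank 𝕜 hk hli
  exact ⟨h, by rw [h]; omega⟩
end

section
/- Let S = S_{a,d,k} as above. Then S is a normal affine semigroup, i.e. S = cone(S) ∩ G(S), where G(S) is the group generated by S in ℤ². -/
set_option linter.unnecessarySeqFocus false in
lemma det_ne (a d : ℤ × ℤ) (hli : qLinIndep a d) : a.1 * d.2 - a.2 * d.1 ≠ 0 := by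
  intro h
  rw [qLinIndep, LinearIndependent.pair_iff] at hli
  by_cases h2 : a.2 = 0 ∧ d.2 = 0
  · obtain ⟨ha2, hd2⟩ := h2
    have := hli (d.1 : ℚ) (-(a.1 : ℚ)) (by
      apply Prod.ext <;> simp [ha2, hd2] <;> ring)
    have ha1 : (a.1 : ℚ) = 0 := by simpa using this.2
    have := hli 1 0 (by
      apply Prod.ext <;> simp [ha2] <;> exact_mod_cast (by simpa using ha1))
    exact one_ne_zero this.1
  · have key := hli (d.2 : ℚ) (-(a.2 : ℚ)) (by
      apply Prod.ext <;> simp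
      · have : (a.1 : ℚ) * d.2 - a.2 * d.1 = 0 := by exact_mod_cast congrArg (Int.cast : ℤ → ℚ) h
        linarith [this]
      · ring)
    rcases not_and_or.mp h2 with h' | h'
    · exact h' (by exact_mod_cast neg_eq_zero.mp key.2)
    · exact h' (by exact_mod_cast key.1)

lemma mem_of_nat (a d : ℤ × ℤ) (k : ℕ) : ∀ (m n : ℕ), n ≤ k * m →
    (m : ℤ) • a + (n : ℤ) • d ∈ Sadk a d k := by
  intro m
  induction m with
  | zero => intro n hn; simp at hn; subst hn; simpa using (zero_mem (Sadk a d k))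
  | succ m ih =>
    intro n hn
    have haS : ∀ j : ℕ, j ≤ k → a + (j : ℤ) • d ∈ Sadk a d k := fun j hj =>
      AddSubmonoid.subset_closure ⟨j, hj, rfl⟩
    by_cases h : n ≤ k
    · have h0 : (m : ℤ) • a + ((0 : ℕ) : ℤ) • d ∈ Sadk a d k := ih 0 (by omega)
      have : ((m+1 : ℕ) : ℤ) • a + (n : ℤ) • d = (a + (n : ℤ) • d) + ((m : ℤ) • a + ((0:ℕ) : ℤ) • d) := by
        push_cast; module
      rw [this]
      exact add_mem (haS n h) h0
    · have h1 : (m : ℤ) • a + ((n - k : ℕ) : ℤ) • d ∈ Sadk a d k :=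
        ih (n - k) (by rw [Nat.mul_succ] at hn; omega)
      have : ((m+1 : ℕ) : ℤ) • a + (n : ℤ) • d
          = (a + (k : ℤ) • d) + ((m : ℤ) • a + ((n - k : ℕ) : ℤ) • d) := by
        have : ((n - k : ℕ) : ℤ) = (n : ℤ) - k := by omega
        rw [this]; push_cast; module
      rw [this]
      exact add_mem (haS k le_rfl) h1

lemma Sadk_elem (a d : ℤ × ℤ) (k : ℕ) {x : ℤ × ℤ} (hx : x ∈ Sadk a d k) :
    ∃ m n : ℕ, n ≤ k * m ∧ x = (m : ℤ) • a + (n : ℤ) • d := by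
  induction hx using AddSubmonoid.closure_induction with
  | mem y hy =>
    obtain ⟨i, hi, rfl⟩ := hy
    exact ⟨1, i, by omega, by push_cast; module⟩
  | zero => exact ⟨0, 0, by omega, by simp⟩
  | add y z _ _ hy hz =>
    obtain ⟨m1, n1, h1, rfl⟩ := hy
    obtain ⟨m2, n2, h2, rfl⟩ := hz
    exact ⟨m1 + m2, n1 + n2, by rw [Nat.mul_add]; omega, by push_cast; module⟩

lemma group_elem (a d : ℤ × ℤ) (k : ℕ) {x : ℤ × ℤ}
    (hx : x ∈ AddSubgroup.closure (gensSet a d k)) :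
    ∃ m n : ℤ, x = m • a + n • d := by
  let G : AddSubgroup (ℤ × ℤ) :=
    { carrier := {x | ∃ m n : ℤ, x = m • a + n • d}
      zero_mem' := ⟨0, 0, by simp⟩
      add_mem' := by
        rintro y z ⟨m1, n1, rfl⟩ ⟨m2, n2, rfl⟩
        exact ⟨m1 + m2, n1 + n2, by module⟩
      neg_mem' := by
        rintro y ⟨m1, n1, rfl⟩
        exact ⟨-m1, -n1, by module⟩ }
  have : AddSubgroup.closure (gensSet a d k) ≤ G := by
    rw [AddSubgroup.closure_le]
    rintro y ⟨i, hi, rfl⟩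
    exact ⟨1, i, by module⟩
  exact this hx


/-- `S_{a,d,k}` is normal: `S = cone(S) ∩ G(S)`, where `cone(S)` consists of the nonnegative
real combinations of the generators and `G(S)` is the group generated by `S` in `ℤ²`. -/
theorem Sadk_normal (a d : ℤ × ℤ) (k : ℕ) (hk : 2 ≤ k)
    (ha : 0 ≤ a) (hd : 0 ≤ d) (hli : qLinIndep a d) (hmin : minGen a d k) :
    ∀ x : ℤ × ℤ, x ∈ Sadk a d k ↔
      ((∃ c : Fin (k + 1) → ℝ, (∀ i, 0 ≤ c i) ∧
          ((x.1 : ℝ), (x.2 : ℝ)) =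
            ∑ i : Fin (k + 1), c i •
              (((a + ((i : ℕ) : ℤ) • d).1 : ℝ), ((a + ((i : ℕ) : ℤ) • d).2 : ℝ))) ∧
        x ∈ AddSubgroup.closure (gensSet a d k)) := by
  intro x
  have hdet := det_ne a d hli
  have hdetR : ((a.1 : ℝ) * d.2 - a.2 * d.1) ≠ 0 := by
    intro h; exact hdet (by exact_mod_cast h)
  set v : Fin (k + 1) → ℝ × ℝ := fun i =>
    (((a + ((i : ℕ) : ℤ) • d).1 : ℝ), ((a + ((i : ℕ) : ℤ) • d).2 : ℝ)) with hv
  constructor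
  · intro hx
    obtain ⟨m, n, hmn, hxeq⟩ := Sadk_elem a d k hx
    refine ⟨?_, ?_⟩
    · -- cone part
      have hkpos : (0 : ℝ) < k := by positivity
      set kfin : Fin (k + 1) := ⟨k, by omega⟩ with hkfin
      have hkne : (0 : Fin (k+1)) ≠ kfin := by
        intro h
        have := congrArg Fin.val h
        simp [hkfin] at this
        omega
      refine ⟨fun i => if i = 0 then (m : ℝ) - n / k else if i = kfin then (n : ℝ) / k else 0,
        ?_, ?_⟩
      · intro i
        dsimp only
        by_cases h0 : i = 0
        · rw [if_pos h0]
          rw [sub_nonneg, div_le_iff₀ hkpos]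
          exact_mod_cast (by rw [mul_comm]; exact_mod_cast hmn : (n : ℝ) ≤ (m : ℝ) * k)
        · rw [if_neg h0]
          by_cases hK : i = kfin
          · rw [if_pos hK]; positivity
          · rw [if_neg hK]
      · have split : ∀ i : Fin (k+1),
            (if i = 0 then (m : ℝ) - n / k else if i = kfin then (n : ℝ) / k else 0) • v i
            = (if i = 0 then ((m : ℝ) - n / k) • v i else 0)
              + (if i = kfin then ((n : ℝ) / k) • v i else 0) := by
          intro i
          by_cases h0 : i = 0
          · rw [if_pos h0, if_pos h0, if_neg (by rw [h0]; exact hkne.symm ∘ Eq.symm), add_zero]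
          · rw [if_neg h0, if_neg h0]
            by_cases hK : i = kfin
            · rw [if_pos hK, if_pos hK, zero_add]
            · rw [if_neg hK, if_neg hK, add_zero, zero_smul]
        rw [Finset.sum_congr rfl (fun i _ => split i), Finset.sum_add_distrib,
          Finset.sum_ite_eq' Finset.univ (0 : Fin (k+1)) (fun i => ((m : ℝ) - n / k) • v i),
          Finset.sum_ite_eq' Finset.univ kfin (fun i => ((n : ℝ) / k) • v i)]
        simp only [Finset.mem_univ, if_true]
        have hv0 : v 0 = ((a.1 : ℝ), (a.2 : ℝ)) := by simp [hv]
        have hvk : v kfin = ((a.1 : ℝ) + k * d.1, (a.2 : ℝ) + k * d.2) := by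
          simp only [hv, hkfin]
          apply Prod.ext <;> (dsimp; push_cast; ring)
        rw [hv0, hvk, hxeq]
        apply Prod.ext <;> simp [Prod.smul_fst, Prod.smul_snd, smul_eq_mul] <;>
          push_cast <;> field_simp <;> ring
    · -- group part
      have : Sadk a d k ≤ (AddSubgroup.closure (gensSet a d k)).toAddSubmonoid :=
        AddSubmonoid.closure_le.mpr AddSubgroup.subset_closure
      exact this hx
  · rintro ⟨⟨c, hc, hsum⟩, hgrp⟩
    obtain ⟨m, n, hxeq⟩ := group_elem a d k hgrp
    set M : ℝ := ∑ i : Fin (k+1), c i with hM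
    set N : ℝ := ∑ i : Fin (k+1), ((i : ℕ) : ℝ) * c i with hN
    have E1 : (x.1 : ℝ) = M * a.1 + N * d.1 := by
      have := congrArg Prod.fst hsum
      simp only [Prod.fst_sum, Prod.smul_fst, smul_eq_mul] at this
      rw [this, hM, hN, Finset.sum_mul, Finset.sum_mul, ← Finset.sum_add_distrib]
      apply Finset.sum_congr rfl
      intro i _
      simp only [Prod.fst_add, Prod.smul_fst, smul_eq_mul]
      push_cast
      ring
    have E2 : (x.2 : ℝ) = M * a.2 + N * d.2 := by
      have := congrArg Prod.snd hsum
      simp only [Prod.snd_sum, Prod.smul_snd, smul_eq_mul] at this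
      rw [this, hM, hN, Finset.sum_mul, Finset.sum_mul, ← Finset.sum_add_distrib]
      apply Finset.sum_congr rfl
      intro i _
      simp only [Prod.snd_add, Prod.smul_snd, smul_eq_mul]
      push_cast
      ring
    have hx1 : (x.1 : ℝ) = (m : ℝ) * a.1 + n * d.1 := by
      rw [hxeq]; simp only [Prod.fst_add, Prod.smul_fst, smul_eq_mul]; push_cast; ring
    have hx2 : (x.2 : ℝ) = (m : ℝ) * a.2 + n * d.2 := by
      rw [hxeq]; simp only [Prod.snd_add, Prod.smul_snd, smul_eq_mul]; push_cast; ring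
    have hm : (m : ℝ) = M := by
      have key : ((m : ℝ) - M) * ((a.1 : ℝ) * d.2 - a.2 * d.1) = 0 := by
        rw [hx1] at E1; rw [hx2] at E2
        linear_combination (d.2 : ℝ) * E1 - (d.1 : ℝ) * E2
      rcases mul_eq_zero.mp key with h | h
      · linarith
      · exact absurd h hdetR
    have hn : (n : ℝ) = N := by
      have key : ((n : ℝ) - N) * ((a.1 : ℝ) * d.2 - a.2 * d.1) = 0 := by
        rw [hx1] at E1; rw [hx2] at E2
        linear_combination (a.1 : ℝ) * E2 - (a.2 : ℝ) * E1
      rcases mul_eq_zero.mp key with h | h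
      · linarith
      · exact absurd h hdetR
    have hM0 : 0 ≤ M := Finset.sum_nonneg fun i _ => hc i
    have hN0 : 0 ≤ N := Finset.sum_nonneg fun i _ => mul_nonneg (by positivity) (hc i)
    have hNM : N ≤ (k : ℝ) * M := by
      rw [hM, Finset.mul_sum]
      apply Finset.sum_le_sum
      intro i _
      have : ((i : ℕ) : ℝ) ≤ (k : ℝ) := by exact_mod_cast Nat.cast_le.mpr (by omega : (i : ℕ) ≤ k)
      exact mul_le_mul_of_nonneg_right this (hc i)
    have hm0 : 0 ≤ m := by exact_mod_cast hm ▸ hM0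
    have hn0 : 0 ≤ n := by exact_mod_cast hn ▸ hN0
    have hnm : n ≤ (k : ℤ) * m := by
      have : (n : ℝ) ≤ (k : ℝ) * m := by rw [hn, hm]; exact hNM
      exact_mod_cast this
    obtain ⟨m', rfl⟩ := Int.eq_ofNat_of_zero_le hm0
    obtain ⟨n', rfl⟩ := Int.eq_ofNat_of_zero_le hn0
    rw [hxeq]
    exact mem_of_nat a d k m' n' (by exact_mod_cast hnm)
end

section
/- For k ≥ 2, let G = ∪_{ℓ=2}^{k} ξ_ℓ ⊆ k[x₁,…,x_{k+1}], where ξ_ℓ = {x_ℓ² − x_{2ℓ−k−1}x_{k+1}} ∪ {x_ℓ x_{ℓ+i} − x_{2ℓ−k−1+i}x_{k+1} : 1 ≤ i ≤ k−ℓ} if 2ℓ > k+1, and ξ_ℓ = {x_ℓ² − x₁x_{2ℓ−1}} ∪ {x_ℓ x_{ℓ+i} − x₁x_{2ℓ−1+i} : 1 ≤ i ≤ k−2ℓ+2} ∪ {x_ℓ x_{ℓ+i} − x_{2ℓ−k−1+i}x_{k+1} : k−2ℓ+2 < i ≤ k−ℓ} if 2ℓ ≤ k+1. Then G is a minimal generating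 set of the ideal it generates: no element of G lies in the ideal generated by the others. -/
open MvPolynomial

variable (𝕜 : Type) [Field 𝕜]

/-- The variable `x_j` (for `1 ≤ j ≤ k+1`) of `𝕜[x₁, …, x_{k+1}]`, with the indexing of the
paper (`x_j` corresponds to the generator `a + (j−1)d`). -/
noncomputable def xv (k : ℕ) (j : ℕ) : MvPolynomial (Fin (k + 1)) 𝕜 :=
  X ⟨(j - 1) % (k + 1), Nat.mod_lt _ k.succ_pos⟩

/-- The set `G = ⋃_{ℓ=2}^{k} ξ_ℓ` of quadratic binomials.  For `2ℓ > k+1`,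
`ξ_ℓ = {x_ℓ² − x_{2ℓ−k−1}x_{k+1}} ∪ {x_ℓ x_{ℓ+i} − x_{2ℓ−k−1+i}x_{k+1} : 1 ≤ i ≤ k−ℓ}`;
for `2ℓ ≤ k+1`,
`ξ_ℓ = {x_ℓ² − x₁x_{2ℓ−1}} ∪ {x_ℓ x_{ℓ+i} − x₁x_{2ℓ−1+i} : 1 ≤ i ≤ k−2ℓ+2}
      ∪ {x_ℓ x_{ℓ+i} − x_{2ℓ−k−1+i}x_{k+1} : k−2ℓ+2 < i ≤ k−ℓ}`. -/
noncomputable def Gset (k : ℕ) : Set (MvPolynomial (Fin (k + 1)) 𝕜) :=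
  {f | ∃ ℓ : ℕ, 2 ≤ ℓ ∧ ℓ ≤ k ∧
    ((k + 1 < 2 * ℓ ∧
       (f = xv 𝕜 k ℓ * xv 𝕜 k ℓ - xv 𝕜 k (2 * ℓ - (k + 1)) * xv 𝕜 k (k + 1) ∨
        ∃ i : ℕ, 1 ≤ i ∧ i ≤ k - ℓ ∧
          f = xv 𝕜 k ℓ * xv 𝕜 k (ℓ + i) - xv 𝕜 k (2 * ℓ + i - (k + 1)) * xv 𝕜 k (k + 1))) ∨
     (2 * ℓ ≤ k + 1 ∧
       (f = xv 𝕜 k ℓ * xv 𝕜 k ℓ - xv 𝕜 k 1 * xv 𝕜 k (2 * ℓ - 1) ∨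
        (∃ i : ℕ, 1 ≤ i ∧ i ≤ k + 2 - 2 * ℓ ∧
          f = xv 𝕜 k ℓ * xv 𝕜 k (ℓ + i) - xv 𝕜 k 1 * xv 𝕜 k (2 * ℓ - 1 + i)) ∨
        (∃ i : ℕ, k + 2 - 2 * ℓ < i ∧ i ≤ k - ℓ ∧
          f = xv 𝕜 k ℓ * xv 𝕜 k (ℓ + i) - xv 𝕜 k (2 * ℓ + i - (k + 1)) * xv 𝕜 k (k + 1)))))}

/-- canonical form of elements of G -/
noncomputable def Pg (k ℓ i : ℕ) : MvPolynomial (Fin (k + 1)) 𝕜 :=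
  xv 𝕜 k ℓ * xv 𝕜 k (ℓ + i) -
    (if 2 * ℓ + i ≤ k + 2 then xv 𝕜 k 1 * xv 𝕜 k (2 * ℓ - 1 + i)
     else xv 𝕜 k (2 * ℓ + i - (k + 1)) * xv 𝕜 k (k + 1))

noncomputable def sub0 (k : ℕ) :
    MvPolynomial (Fin (k + 1)) 𝕜 →ₐ[𝕜] MvPolynomial (Fin (k + 1)) 𝕜 :=
  aeval (fun j : Fin (k + 1) => if j.val = 0 ∨ j.val = k then 0 else X j)

lemma sub0_xv_mid (k j : ℕ) (h2 : 2 ≤ j) (hj : j ≤ k) :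
    sub0 𝕜 k (xv 𝕜 k j) = X ⟨j - 1, by omega⟩ := by
  have hm : (j - 1) % (k + 1) = j - 1 := Nat.mod_eq_of_lt (by omega)
  simp only [sub0, xv, aeval_X]
  rw [if_neg]
  · congr 1; exact Fin.ext hm
  · simp only [hm]; omega

lemma sub0_xv_one (k : ℕ) : sub0 𝕜 k (xv 𝕜 k 1) = 0 := by
  simp [sub0, xv]

lemma sub0_xv_top (k : ℕ) : sub0 𝕜 k (xv 𝕜 k (k + 1)) = 0 := by
  simp [sub0, xv, Nat.mod_self, Nat.mod_eq_of_lt (Nat.lt_succ_self k)]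

/-- leading exponent of `Pg k ℓ i` after specialization -/
noncomputable def Mg (k ℓ i : ℕ) : Fin (k + 1) →₀ ℕ :=
  Finsupp.single ⟨(ℓ - 1) % (k + 1), Nat.mod_lt _ k.succ_pos⟩ 1 +
    Finsupp.single ⟨(ℓ + i - 1) % (k + 1), Nat.mod_lt _ k.succ_pos⟩ 1

lemma sub0_Pg (k ℓ i : ℕ) (h2 : 2 ≤ ℓ) (hli : ℓ + i ≤ k) :
    sub0 𝕜 k (Pg 𝕜 k ℓ i) = monomial (Mg k ℓ i) (1 : 𝕜) := by
  have e1 : sub0 𝕜 k (xv 𝕜 k ℓ) = X ⟨ℓ - 1, by omega⟩ := sub0_xv_mid 𝕜 k ℓ h2 (by omega)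
  have e2 : sub0 𝕜 k (xv 𝕜 k (ℓ + i)) = X ⟨ℓ + i - 1, by omega⟩ :=
    sub0_xv_mid 𝕜 k (ℓ + i) (by omega) hli
  have hz : sub0 𝕜 k (if 2 * ℓ + i ≤ k + 2 then xv 𝕜 k 1 * xv 𝕜 k (2 * ℓ - 1 + i)
      else xv 𝕜 k (2 * ℓ + i - (k + 1)) * xv 𝕜 k (k + 1)) = 0 := by
    split
    · rw [map_mul, sub0_xv_one, zero_mul]
    · rw [map_mul, sub0_xv_top, mul_zero]
  rw [Pg, map_sub, map_mul, e1, e2, hz, sub_zero, Mg]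
  have m1 : (ℓ - 1) % (k + 1) = ℓ - 1 := Nat.mod_eq_of_lt (by omega)
  have m2 : (ℓ + i - 1) % (k + 1) = ℓ + i - 1 := Nat.mod_eq_of_lt (by omega)
  simp_rw [m1, m2, X, monomial_mul, one_mul]

lemma single_pair_inj {α : Type*} [DecidableEq α] {a b c d : α}
    (h : Finsupp.single a 1 + Finsupp.single b 1 = Finsupp.single c 1 + Finsupp.single d 1) :
    (a = c ∧ b = d) ∨ (a = d ∧ b = c) := by
  have h2 := congrArg Finsupp.toMultiset h
  simp only [map_add, Finsupp.toMultiset_single, one_nsmul, Multiset.singleton_add] at h2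
  rcases Multiset.cons_eq_cons.mp h2 with ⟨h3, h4⟩ | ⟨h3, cs, h4, h5⟩
  · left; exact ⟨h3, by simpa using h4⟩
  · right
    have hcs : cs = 0 := by
      have := congrArg Multiset.card h4
      simp at this
      simpa using this
    subst hcs
    simp only [Multiset.cons_zero, Multiset.singleton_inj] at h4 h5
    exact ⟨h5.symm, h4⟩

lemma single_pair_le {α : Type*} [DecidableEq α] {a b c d : α}
    (h : Finsupp.single a 1 + Finsupp.single b 1 ≤ Finsupp.single c 1 + Finsupp.single d 1) :
    Finsupp.single a 1 + Finsupp.single b 1 = Finsupp.single c 1 + Finsupp.single d 1 := by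
  obtain ⟨e, he⟩ := exists_add_of_le h
  have hc := congrArg (fun m => Multiset.card (Finsupp.toMultiset m)) he
  simp only [map_add, Finsupp.toMultiset_single, one_nsmul, Multiset.card_add,
    Multiset.card_singleton] at hc
  have h0 : Finsupp.toMultiset e = 0 := Multiset.card_eq_zero.mp (by omega)
  have he0 : e = 0 := by
    have := congrArg Multiset.toFinsupp h0
    rwa [Finsupp.toMultiset_toFinsupp, Multiset.toFinsupp_zero] at this
  rw [he, he0, add_zero]

lemma Mg_inj (k ℓ i ℓ' i' : ℕ) (h2 : 2 ≤ ℓ) (hli : ℓ + i ≤ k) (h2' : 2 ≤ ℓ')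
    (hli' : ℓ' + i' ≤ k) (h : Mg k ℓ i = Mg k ℓ' i') : ℓ = ℓ' ∧ i = i' := by
  have m1 : (ℓ - 1) % (k + 1) = ℓ - 1 := Nat.mod_eq_of_lt (by omega)
  have m2 : (ℓ + i - 1) % (k + 1) = ℓ + i - 1 := Nat.mod_eq_of_lt (by omega)
  have m3 : (ℓ' - 1) % (k + 1) = ℓ' - 1 := Nat.mod_eq_of_lt (by omega)
  have m4 : (ℓ' + i' - 1) % (k + 1) = ℓ' + i' - 1 := Nat.mod_eq_of_lt (by omega)
  rw [Mg, Mg] at h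
  rcases single_pair_inj h with ⟨ha, hb⟩ | ⟨ha, hb⟩ <;>
  · have ha' := congrArg Fin.val ha
    have hb' := congrArg Fin.val hb
    simp only [m1, m2, m3, m4] at ha' hb'
    omega

lemma mem_Gset_struct {k : ℕ} {f : MvPolynomial (Fin (k + 1)) 𝕜} (hf : f ∈ Gset 𝕜 k) :
    ∃ ℓ i : ℕ, 2 ≤ ℓ ∧ ℓ + i ≤ k ∧ f = Pg 𝕜 k ℓ i := by
  obtain ⟨ℓ, h2, hlk, hcase⟩ := hf
  rcases hcase with ⟨hgt, h | ⟨i, hi1, hi2, h⟩⟩ | ⟨hle, h | ⟨i, hi1, hi2, h⟩ | ⟨i, hi1, hi2, h⟩⟩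
  · refine ⟨ℓ, 0, h2, by omega, ?_⟩
    rw [h, Pg, add_zero]
    congr 1
    rcases eq_or_lt_of_le (Nat.succ_le_of_lt hgt) with he | hlt
    · rw [if_pos (by omega)]
      have e1 : 2 * ℓ - (k + 1) = 1 := by omega
      have e2 : 2 * ℓ - 1 + 0 = k + 1 := by omega
      rw [e1, e2]
    · rw [if_neg (by omega)]
      norm_num
  · refine ⟨ℓ, i, h2, by omega, ?_⟩
    rw [h, Pg, if_neg (by omega)]
  · refine ⟨ℓ, 0, h2, by omega, ?_⟩
    rw [h, Pg, add_zero, if_pos (by omega)]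
    norm_num
  · refine ⟨ℓ, i, h2, by omega, ?_⟩
    rw [h, Pg, if_pos (by omega)]
  · refine ⟨ℓ, i, h2, by omega, ?_⟩
    rw [h, Pg, if_neg (by omega)]


/-- `G` is a minimal generating set of the ideal it generates: no element of `G` lies in the
ideal generated by the other elements of `G`. -/
theorem Gset_minimal (k : ℕ) (hk : 2 ≤ k) :
    ∀ f ∈ Gset 𝕜 k, f ∉ Ideal.span (Gset 𝕜 k \ {f}) := by
  intro f hf hmem
  obtain ⟨ℓ, i, h2, hli, rfl⟩ := mem_Gset_struct 𝕜 hf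
  set f := Pg 𝕜 k ℓ i with hfdef
  have hmap : sub0 𝕜 k f ∈ Ideal.span (sub0 𝕜 k '' (Gset 𝕜 k \ {f})) := by
    rw [← Ideal.map_span]
    exact Ideal.mem_map_of_mem _ hmem
  set T : Set (Fin (k + 1) →₀ ℕ) :=
    {m | ∃ ℓ' i' : ℕ, 2 ≤ ℓ' ∧ ℓ' + i' ≤ k ∧ ¬(ℓ' = ℓ ∧ i' = i) ∧ m = Mg k ℓ' i'} with hT
  have hsub : sub0 𝕜 k '' (Gset 𝕜 k \ {f}) ⊆ (fun m => monomial m (1 : 𝕜)) '' T := by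
    rintro _ ⟨g, ⟨hg, hne⟩, rfl⟩
    obtain ⟨ℓ', i', h2', hli', rfl⟩ := mem_Gset_struct 𝕜 hg
    refine ⟨Mg k ℓ' i', ⟨ℓ', i', h2', hli', ?_, rfl⟩, (sub0_Pg 𝕜 k ℓ' i' h2' hli').symm⟩
    rintro ⟨rfl, rfl⟩
    exact hne rfl
  have hmem2 : sub0 𝕜 k f ∈ Ideal.span ((fun m => monomial m (1 : 𝕜)) '' T) :=
    Ideal.span_mono hsub hmap
  rw [hfdef, sub0_Pg 𝕜 k ℓ i h2 hli] at hmem2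
  obtain ⟨m, hmT, hmle⟩ := (mem_ideal_span_monomial_image).mp hmem2 (Mg k ℓ i)
    (by simp [support_monomial])
  obtain ⟨ℓ', i', h2', hli', hne, rfl⟩ := hmT
  have heq : Mg k ℓ' i' = Mg k ℓ i := by
    rw [Mg, Mg] at hmle ⊢
    exact single_pair_le hmle
  obtain ⟨hl, hi⟩ := Mg_inj k ℓ' i' ℓ i h2' hli' h2 hli heq
  exact hne ⟨hl, hi⟩
end
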